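/- For every n ≥ 0, the 1/2-Changhee polynomial satisfies Ch_{n,1/2}(x) = ∑_{m=0}^n ∑_{j=0}^m (x/2)^j S₁(m,j) Ch_{n-m,1/2} binom(n,m), as an identity of polynomials in x over ℚ. -/

import Mathlib

/-!
With `N(t) = ∑ Ch_{n,1/2} tⁿ/n!`, the closed form `Ch_{n,1/2}/n! = (-1/4)ⁿ Cₙ` says that
`N(t) = c(-t/4)` for the Catalan series `c`, and the binomial coefficients `binom(1/2, k+1)`
give `√(1+t) = 1 + (t/2) N(t)`. The Catalan equation `c = 1 + u c²` then yields
`N(t) (1 + √(1+t)) = 2`, so the generating function of the polynomials is `N(t) (1+t)^{x/2}`.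
Both factors are exponential generating functions, so the `n`-th coefficient is the binomial
convolution of `Ch_{m,1/2}` with the falling factorials
`(x/2)(x/2 - 1)⋯(x/2 - m + 1) = ∑ⱼ S₁(m,j) (x/2)ʲ`.
-/

open Finset Polynomial

/-- Signed Stirling numbers of the first kind. -/
noncomputable def stirling1 (n m : ℕ) : ℚ :=
  (∏ i ∈ Finset.range n, (Polynomial.X - Polynomial.C (i : ℚ))).coeff m

/-- The `1/2`-Changhee numbers `Ch_{n,1/2} = (-1)^n n! C_n / 4^n`. -/
noncomputable def changheeHalf (n : ℕ) : ℚ :=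
  (-1) ^ n * (n.factorial : ℚ) * (catalan n : ℚ) / 4 ^ n

theorem succ_succ_mul_catalan_succ (n : ℕ) :
    (n + 2) * catalan (n + 1) = 2 * (2 * n + 1) * catalan n := by
  apply Nat.eq_of_mul_eq_mul_left n.succ_pos
  calc (n + 1) * ((n + 2) * catalan (n + 1)) = (n + 1) * (n + 1).centralBinom := by
        rw [← succ_mul_catalan_eq_centralBinom]
    _ = 2 * (2 * n + 1) * n.centralBinom := Nat.succ_mul_centralBinom_succ n
    _ = (n + 1) * (2 * (2 * n + 1) * catalan n) := by
        rw [← succ_mul_catalan_eq_centralBinom]; ring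

theorem prod_range_half_sub_div_factorial (k : ℕ) :
    (∏ i ∈ range (k + 1), ((1 : ℚ) / 2 - i)) / (k + 1).factorial =
      (-1) ^ k * catalan k / (2 * 4 ^ k) := by
  induction k with
  | zero => norm_num
  | succ k ih =>
    have hcat : ((k : ℚ) + 2) * catalan (k + 1) = 2 * (2 * k + 1) * catalan k := by
      exact_mod_cast succ_succ_mul_catalan_succ k
    rw [prod_range_succ, Nat.factorial_succ (k + 1), Nat.cast_mul,
      mul_comm _ ((k + 1).factorial : ℚ), ← div_mul_div_comm, ih]
    push_cast
    field_simp
    linear_combination 2 * 4 ^ k * (-1 : ℚ) ^ k * hcat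

section ExponentialGeneratingFunction

variable {A : Type*} [CommRing A] [Algebra ℚ A]

noncomputable def egf (a : ℕ → A) : PowerSeries A :=
  PowerSeries.mk fun n => (n.factorial : ℚ)⁻¹ • a n

theorem coeff_egf (a : ℕ → A) (n : ℕ) :
    PowerSeries.coeff n (egf a) = (n.factorial : ℚ)⁻¹ • a n :=
  PowerSeries.coeff_mk _ _

theorem egf_injective : Function.Injective (egf (A := A)) := by
  intro a b h
  funext n
  have hn := congrArg (PowerSeries.coeff n) h
  rw [coeff_egf, coeff_egf] at hn
  exact smul_right_injective A (inv_ne_zero (Nat.cast_ne_zero.2 n.factorial_ne_zero)) hn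

theorem egf_mul (a b : ℕ → A) :
    egf a * egf b = egf fun n => ∑ m ∈ range (n + 1), a m * b (n - m) * (n.choose m : A) := by
  ext n
  rw [PowerSeries.coeff_mul, Nat.sum_antidiagonal_eq_sum_range_succ_mk, coeff_egf, smul_sum]
  refine sum_congr rfl fun m hm => ?_
  have hmn : m ≤ n := Nat.lt_succ_iff.mp (mem_range.mp hm)
  rw [coeff_egf, coeff_egf, smul_mul_smul_comm, mul_comm _ (n.choose m : A), ← nsmul_eq_mul,
    ← Nat.cast_smul_eq_nsmul ℚ, smul_smul, Nat.cast_choose ℚ hmn]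
  congr 1
  field_simp

theorem map_egf {B : Type*} [CommRing B] [Algebra ℚ B] (f : A →+* B) (a : ℕ → A) :
    PowerSeries.map f (egf a) = egf fun n => f (a n) := by
  ext n
  rw [PowerSeries.coeff_map, coeff_egf, coeff_egf, map_rat_smul]

end ExponentialGeneratingFunction

theorem prod_range_sub_eq_sum_stirling1 {A : Type*} [CommRing A] [Algebra ℚ A] (x : A) (m : ℕ) :
    ∏ i ∈ range m, (x - i) = ∑ j ∈ range (m + 1), stirling1 m j • x ^ j := by
  have hdeg : (∏ i ∈ range m, (X - C (i : ℚ))).natDegree < m + 1 := by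
    rw [natDegree_prod _ _ fun i _ => X_sub_C_ne_zero _]
    simp only [natDegree_X_sub_C, sum_const, card_range, smul_eq_mul, mul_one]
    exact m.lt_succ_self
  simpa [stirling1] using aeval_eq_sum_range' hdeg x

noncomputable def sqrtOneAddSeries : PowerSeries ℚ :=
  PowerSeries.mk fun k => (∏ i ∈ range k, ((1 : ℚ) / 2 - i)) / k.factorial

theorem egf_changheeHalf_eq_rescale_catalanSeries :
    egf changheeHalf =
      PowerSeries.rescale (-1 / 4 : ℚ)
        (PowerSeries.map (Nat.castRingHom ℚ) PowerSeries.catalanSeries) := by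
  ext k
  simp only [coeff_egf, changheeHalf, smul_eq_mul, PowerSeries.coeff_rescale, div_pow,
    PowerSeries.coeff_map, PowerSeries.catalanSeries_coeff, eq_natCast]
  field_simp

theorem egf_changheeHalf_sq_mul_X_add_one :
    egf changheeHalf ^ 2 * (PowerSeries.C (-1 / 4 : ℚ) * PowerSeries.X) + 1 =
      egf changheeHalf := by
  have h := congrArg
    (fun f => PowerSeries.rescale (-1 / 4 : ℚ) (PowerSeries.map (Nat.castRingHom ℚ) f))
    PowerSeries.catalanSeries_sq_mul_X_add_one
  simpa [PowerSeries.rescale_X, ← egf_changheeHalf_eq_rescale_catalanSeries] using h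

theorem sqrtOneAddSeries_eq :
    sqrtOneAddSeries = 1 + PowerSeries.C (1 / 2 : ℚ) * PowerSeries.X * egf changheeHalf := by
  ext k
  rcases k with _ | k
  · simp [sqrtOneAddSeries]
  · rw [sqrtOneAddSeries, PowerSeries.coeff_mk, prod_range_half_sub_div_factorial, map_add,
      PowerSeries.coeff_one, if_neg k.succ_ne_zero, zero_add, mul_comm _ (egf changheeHalf),
      ← mul_assoc, PowerSeries.coeff_succ_mul_X, PowerSeries.coeff_mul_C, coeff_egf, changheeHalf,
      smul_eq_mul]
    field_simp

theorem egf_changheeHalf_mul_one_add_sqrtOneAddSeries :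
    egf changheeHalf * (1 + sqrtOneAddSeries) = 2 := by
  rw [sqrtOneAddSeries_eq]
  have hC : PowerSeries.C (1 / 2 : ℚ) + 2 * PowerSeries.C (-1 / 4 : ℚ) = 0 := by
    rw [← map_ofNat PowerSeries.C 2, ← map_mul, ← map_add]
    norm_num
  linear_combination (-2 : PowerSeries ℚ) * egf_changheeHalf_sq_mul_X_add_one +
    egf changheeHalf ^ 2 * PowerSeries.X * hC

/-- If `Ch` is the sequence of `1/2`-Changhee polynomials, defined by the generating
function `(2/(1+√(1+t)))·(1+t)^{x/2} = ∑ Ch_{n,1/2}(x) t^n/n!` in `ℚ[x][[t]]`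
(with `√(1+t)` and `(1+t)^{x/2}` the binomial series), then
`Ch_{n,1/2}(x) = ∑_{m=0}^n ∑_{j=0}^m (x/2)^j S₁(m,j) Ch_{n-m,1/2} binom(n,m)`. -/
theorem changheeHalfPoly_eq (Ch : ℕ → Polynomial ℚ)
    (hCh : (PowerSeries.mk fun n => Polynomial.C ((n.factorial : ℚ))⁻¹ * Ch n) *
        ((1 : PowerSeries (Polynomial ℚ)) + PowerSeries.mk fun n =>
          (Polynomial.C ((∏ i ∈ Finset.range n, ((1 : ℚ) / 2 - i)) / (n.factorial : ℚ)) :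
            Polynomial ℚ)) =
      2 * PowerSeries.mk fun n => Polynomial.C ((n.factorial : ℚ))⁻¹ *
        ∏ i ∈ Finset.range n,
          (Polynomial.C ((1 : ℚ) / 2) * Polynomial.X - Polynomial.C (i : ℚ)))
    (n : ℕ) :
    Ch n = ∑ m ∈ Finset.range (n + 1), ∑ j ∈ Finset.range (m + 1),
      (Polynomial.C ((1 : ℚ) / 2) * Polynomial.X) ^ j * Polynomial.C (stirling1 m j) *
        Polynomial.C (changheeHalf (n - m)) * Polynomial.C ((n.choose m : ℚ)) := by
  have hegf : ∀ f : ℕ → ℚ[X],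
      (PowerSeries.mk fun n => C ((n.factorial : ℚ))⁻¹ * f n) = egf f := by
    intro f; ext n; simp [coeff_egf, C_mul']
  have hU : ((1 : PowerSeries ℚ[X]) + PowerSeries.mk fun n =>
      C ((∏ i ∈ range n, ((1 : ℚ) / 2 - i)) / (n.factorial : ℚ))) =
      PowerSeries.map C (1 + sqrtOneAddSeries) := by
    ext n; simp [sqrtOneAddSeries, PowerSeries.coeff_map]
  rw [hegf, hegf, hU] at hCh
  have hN :
      PowerSeries.map C (egf changheeHalf) * PowerSeries.map C (1 + sqrtOneAddSeries) = 2 := by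
    rw [← map_mul, egf_changheeHalf_mul_one_add_sqrtOneAddSeries, map_ofNat]
  have hne : PowerSeries.map C (1 + sqrtOneAddSeries) ≠ 0 := by
    intro h
    rw [h, mul_zero, ← map_ofNat PowerSeries.C 2, eq_comm,
      map_eq_zero_iff _ PowerSeries.C_injective] at hN
    exact two_ne_zero hN
  have key : egf Ch = (egf fun n => ∏ i ∈ range n, (C (1 / 2 : ℚ) * X - C (i : ℚ))) *
      PowerSeries.map C (egf changheeHalf) :=
    mul_right_cancel₀ hne (by rw [hCh, mul_assoc, hN, mul_comm])
  rw [map_egf, egf_mul] at key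
  rw [congrFun (egf_injective key) n]
  refine sum_congr rfl fun m _ => ?_
  simp only [map_natCast C, prod_range_sub_eq_sum_stirling1, sum_mul, smul_eq_C_mul]
  refine sum_congr rfl fun j _ => ?_
  ring
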